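/- Let α ∈ (0,1), C > 0, and let u be a function on the closure of B₁⁺, continuously differentiable up to the flat boundary B₁⁰, with u = 0 on B₁⁰ and with normal derivative ∂_d u that is α-Hölder continuous on the closure of B_{3/4}⁺. Suppose that for each i = 1, …, d−1 there is an α-Hölder continuous function H_i : B⁰_{3/4} → ℝ such that |∂_i u(x) − H_i(x₀)·x_d| ≤ C·|x − x₀|^{1+α} for all x ∈ B₁⁺ and x₀ ∈ B⁰_{3/4}. Then the restriction of ∂_d u to B⁰_{3/4} is of class C^{1,α}: for every x₀ ∈ B⁰_{3/4}, every i = 1, …, d−1 and every small h > 0 with x₀ + h·e_i ∈ B⁰_{3/4}, one has |∂_d u(x₀ + h·e_i) − ∂_d u(x₀) − h·H_i(x₀)| ≤ C'·h^{1+α}, where C' depends only on C, α and the Hölder constants of ∂_d u and the H_i; in particular the tangential derivative ∂_i(∂_d u) exists on B⁰_{3/4} and equals H_i. -/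

import Mathlib

open scoped RealInnerProductSpace Classical
open Metric Set

noncomputable section

/-- Euclidean space of dimension `d`. -/
abbrev Euc (d : ℕ) := EuclideanSpace ℝ (Fin d)

variable {d : ℕ}

/-- The Pucci maximal operator `M⁺_{λ,Λ}`, defined through the eigenvalues of a
symmetric (= Hermitian, over `ℝ`) matrix; junk value `0` on non-symmetric matrices. -/
def pucciSup (lam Lam : ℝ) (M : Matrix (Fin d) (Fin d) ℝ) : ℝ :=
  if h : M.IsHermitian then
    ∑ i, (Lam * max (h.eigenvalues i) 0 + lam * min (h.eigenvalues i) 0)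
  else 0

/-- The Pucci minimal operator `M⁻_{λ,Λ}`. -/
def pucciInf (lam Lam : ℝ) (M : Matrix (Fin d) (Fin d) ℝ) : ℝ :=
  if h : M.IsHermitian then
    ∑ i, (lam * max (h.eigenvalues i) 0 + Lam * min (h.eigenvalues i) 0)
  else 0

/-- The Hessian matrix of `φ : ℝ^d → ℝ` at `x`. -/
def hessianMatrix (φ : Euc d → ℝ) (x : Euc d) : Matrix (Fin d) (Fin d) ℝ :=
  Matrix.of fun i j =>
    iteratedFDeriv ℝ 2 φ x ![EuclideanSpace.single i 1, EuclideanSpace.single j 1]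

/-- The viscosity class `S*(λ,Λ,K,L)` on a set `Ω`: `u` satisfies, in the viscosity
sense, `M⁺(D²u) + K|Du| ≥ -L` and `M⁻(D²u) - K|Du| ≤ L` in `Ω`. -/
def InSStar (lam Lam K L : ℝ) (Ω : Set (Euc d)) (u : Euc d → ℝ) : Prop :=
  ∀ x₀ ∈ Ω, ∀ φ : Euc d → ℝ, ContDiffAt ℝ 2 φ x₀ →
    (IsLocalMaxOn (fun x => u x - φ x) Ω x₀ →
      -L ≤ pucciSup lam Lam (hessianMatrix φ x₀) + K * ‖gradient φ x₀‖) ∧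
    (IsLocalMinOn (fun x => u x - φ x) Ω x₀ →
      pucciInf lam Lam (hessianMatrix φ x₀) - K * ‖gradient φ x₀‖ ≤ L)

/-- `u` is a viscosity solution of `F(D²u, Du, x) = f x` in `Ω`. -/
def IsViscositySolution (F : Matrix (Fin d) (Fin d) ℝ → Euc d → Euc d → ℝ)
    (f : Euc d → ℝ) (Ω : Set (Euc d)) (u : Euc d → ℝ) : Prop :=
  ∀ x₀ ∈ Ω, ∀ φ : Euc d → ℝ, ContDiffAt ℝ 2 φ x₀ →
    (IsLocalMaxOn (fun x => u x - φ x) Ω x₀ →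
      f x₀ ≤ F (hessianMatrix φ x₀) (gradient φ x₀) x₀) ∧
    (IsLocalMinOn (fun x => u x - φ x) Ω x₀ →
      F (hessianMatrix φ x₀) (gradient φ x₀) x₀ ≤ f x₀)

/-- Frobenius norm of a matrix. -/
def matNorm (M : Matrix (Fin d) (Fin d) ℝ) : ℝ :=
  Real.sqrt (∑ i, ∑ j, (M i j) ^ 2)

/-- Structure condition (H1): uniform ellipticity with constants `λ, Λ` and Lipschitz
continuity in the gradient variable with constant `K`, together with `F(0,0,x) = 0`. -/
def SatisfiesH1 (lam Lam K : ℝ) (S : Set (Euc d))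
    (F : Matrix (Fin d) (Fin d) ℝ → Euc d → Euc d → ℝ) : Prop :=
  (∀ M N : Matrix (Fin d) (Fin d) ℝ, M.IsHermitian → N.IsHermitian →
    ∀ p q : Euc d, ∀ x ∈ S,
      F M p x - F N q x ≤ pucciSup lam Lam (M - N) + K * ‖p - q‖ ∧
      pucciInf lam Lam (M - N) - K * ‖p - q‖ ≤ F M p x - F N q x) ∧
  ∀ x ∈ S, F 0 0 x = 0

/-- Structure condition (H2): Hölder continuity in `x` with exponent `abar`. -/
def SatisfiesH2 (abar Cbar : ℝ) (S : Set (Euc d))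
    (F : Matrix (Fin d) (Fin d) ℝ → Euc d → Euc d → ℝ) : Prop :=
  ∀ M : Matrix (Fin d) (Fin d) ℝ, M.IsHermitian →
    ∀ p : Euc d, ∀ x ∈ S, ∀ y ∈ S,
      |F M p x - F M p y| ≤ Cbar * ‖x - y‖ ^ abar * (matNorm M + ‖p‖)

/-- The last coordinate `x_d` of a point (junk value `0` when `d = 0`). -/
def lastCoord (x : Euc d) : ℝ :=
  if h : 0 < d then x ⟨d - 1, Nat.sub_lt h Nat.one_pos⟩ else 0

/-- The open upper half ball `B_r⁺ = {|x| < r, x_d > 0}`. -/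
def halfBall (d : ℕ) (r : ℝ) : Set (Euc d) :=
  {x | ‖x‖ < r ∧ 0 < lastCoord x}

/-- The flat boundary part `B_r⁰ = {|x| < r, x_d = 0}`. -/
def flatBall (d : ℕ) (r : ℝ) : Set (Euc d) :=
  {x | ‖x‖ < r ∧ lastCoord x = 0}

/-- The point `e = (0, …, 0, 1/2)`. -/
def ePoint (d : ℕ) : Euc d :=
  if h : 0 < d then EuclideanSpace.single ⟨d - 1, Nat.sub_lt h Nat.one_pos⟩ ((1 : ℝ)/2) else 0

/-- Sup-norm of `u` over a set `s`. -/
def supNormOn (s : Set (Euc d)) (u : Euc d → ℝ) : ℝ :=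
  sSup ((fun x => |u x|) '' s)

/-- Oscillation of `u` over a set `s`. -/
def oscOn (s : Set (Euc d)) (u : Euc d → ℝ) : ℝ :=
  sSup (u '' s) - sInf (u '' s)

/-- A matrix acting on a vector of Euclidean space. -/
def matVec (M : Matrix (Fin d) (Fin d) ℝ) (v : Euc d) : Euc d :=
  (WithLp.equiv 2 (Fin d → ℝ)).symm (M.mulVec ((WithLp.equiv 2 (Fin d → ℝ)) v))

/-- The quadratic form `v ↦ M v · v`. -/
def quadForm (M : Matrix (Fin d) (Fin d) ℝ) (v : Euc d) : ℝ :=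
  ∑ i, ∑ j, M i j * v i * v j

/-- `g` is of class `C^{1,a}` on `s`, with (tangential) gradient `G` and
`C^{1,a}`-norm at most `N`. -/
def C1DataOn (a N : ℝ) (s : Set (Euc d)) (g : Euc d → ℝ) (G : Euc d → Euc d) : Prop :=
  (∀ x ∈ s, |g x| ≤ N ∧ ‖G x‖ ≤ N) ∧
  ∀ x ∈ s, ∀ y ∈ s,
    ‖G x - G y‖ ≤ N * ‖x - y‖ ^ a ∧
    |g x - g y - ⟪G y, x - y⟫| ≤ N * ‖x - y‖ ^ (1 + a)

/-- `g` is of class `C^{2,a}` on `s`, with gradient `G`, Hessian `Hg`, and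
`C^{2,a}`-norm at most `N`. -/
def C2DataOn (a N : ℝ) (s : Set (Euc d)) (g : Euc d → ℝ) (G : Euc d → Euc d)
    (Hg : Euc d → Matrix (Fin d) (Fin d) ℝ) : Prop :=
  (∀ x ∈ s, |g x| ≤ N ∧ ‖G x‖ ≤ N ∧ matNorm (Hg x) ≤ N) ∧
  ∀ x ∈ s, ∀ y ∈ s,
    matNorm (Hg x - Hg y) ≤ N * ‖x - y‖ ^ a ∧
    ‖G x - G y - matVec (Hg y) (x - y)‖ ≤ N * ‖x - y‖ ^ (1 + a) ∧
    |g x - g y - ⟪G y, x - y⟫ - (1/2) * quadForm (Hg y) (x - y)| ≤ N * ‖x - y‖ ^ (2 + a)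

/-- `Ω` is a `C²`-domain near its boundary: every boundary point admits a local `C²`
diffeomorphism flattening the boundary onto the upper half ball. -/
def HasC2Boundary (Ω : Set (Euc d)) : Prop :=
  ∀ z ∈ frontier Ω, ∃ (U : Set (Euc d)) (φ ψ : Euc d → Euc d),
    IsOpen U ∧ z ∈ U ∧
    ContDiffOn ℝ 2 φ U ∧ ContDiffOn ℝ 2 ψ (closure (halfBall d 1)) ∧
    (∀ y ∈ U, ψ (φ y) = y) ∧
    φ '' (U ∩ Ω) = halfBall d 1 ∧
    φ '' (U ∩ frontier Ω) = flatBall d 1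

/-- `Ω` is a `C^{2,a}`-domain near its boundary. -/
def HasC2AlphaBoundary (a : ℝ) (Ω : Set (Euc d)) : Prop :=
  ∀ z ∈ frontier Ω, ∃ (U : Set (Euc d)) (φ ψ : Euc d → Euc d) (Cφ : ℝ),
    IsOpen U ∧ z ∈ U ∧
    ContDiffOn ℝ 2 φ U ∧ ContDiffOn ℝ 2 ψ (closure (halfBall d 1)) ∧
    (∀ x ∈ U, ∀ y ∈ U,
      ‖iteratedFDerivWithin ℝ 2 φ U x - iteratedFDerivWithin ℝ 2 φ U y‖ ≤ Cφ * ‖x - y‖ ^ a) ∧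
    (∀ y ∈ U, ψ (φ y) = y) ∧
    φ '' (U ∩ Ω) = halfBall d 1 ∧
    φ '' (U ∩ frontier Ω) = flatBall d 1

/-! Fix `x₀`, `x₁ = x₀ + h eᵢ` on the flat boundary and a height `t > 0`. Since `u` vanishes on
the flat boundary and `∂_d u` is `α`-Hölder, the mean value theorem along the vertical segments
gives `u (xⱼ + t e_d) = t ∂_d u (xⱼ) + O(t^{1+α})`. Along the horizontal segment from `x₀ + t e_d`
to `x₁ + t e_d`, the expansion of `∂ᵢ u` and the Hölder continuity of `Hᵢ` give
`u (x₁ + t e_d) - u (x₀ + t e_d) = h t Hᵢ(x₀) + t O(h t^α + h^{1+α})`. Comparing the two, dividing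
by `t` and letting `t → 0` leaves `|∂_d u (x₁) - ∂_d u (x₀) - h Hᵢ(x₀)| ≤ C h^{1+α}`. -/

open Filter Topology

lemma abs_sub_sub_le_of_hasGradientWithinAt_segment {F : Type*} [NormedAddCommGroup F]
    [InnerProductSpace ℝ F] [CompleteSpace F] {f : F → ℝ} {f' : F → F} {s : Set F} {x y : F}
    {c K : ℝ}
    (hf : ∀ z ∈ s, HasGradientWithinAt f (f' z) s z) (hxy : segment ℝ x y ⊆ s)
    (bound : ∀ z ∈ segment ℝ x y, |⟪f' z, y - x⟫ - c| ≤ K) :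
    |f y - f x - c| ≤ K := by
  have hmem : ∀ τ ∈ Icc (0 : ℝ) 1, x + τ • (y - x) ∈ segment ℝ x y := fun τ hτ => by
    rw [segment_eq_image']; exact ⟨τ, hτ, rfl⟩
  have hderiv : ∀ τ ∈ Icc (0 : ℝ) 1,
      HasDerivWithinAt (fun τ : ℝ => f (x + τ • (y - x)) - τ * c)
        (⟪f' (x + τ • (y - x)), y - x⟫ - c) (Icc 0 1) τ := fun τ hτ => by
    have hline : HasDerivWithinAt (fun τ : ℝ => x + τ • (y - x)) (y - x) (Icc 0 1) τ := by
      simpa using (((hasDerivAt_id τ).smul_const (y - x)).const_add x).hasDerivWithinAt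
    have := ((hf _ (hxy (hmem τ hτ))).hasFDerivWithinAt.comp_hasDerivWithinAt τ hline
      fun σ hσ => hxy (hmem σ hσ)).sub (hasDerivAt_mul_const c).hasDerivWithinAt
    rwa [InnerProductSpace.toDual_apply_apply] at this
  simpa [Real.norm_eq_abs, sub_sub, add_comm] using
    norm_image_sub_le_of_norm_deriv_le_segment_01' hderiv
      fun τ hτ => bound _ (hmem τ (Ico_subset_Icc_self hτ))

lemma le_of_forall_le_mul_rpow_add {a b K α T : ℝ} (hα : 0 < α) (hT : 0 < T)
    (h : ∀ t ∈ Ioo 0 T, a ≤ K * t ^ α + b) : a ≤ b := by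
  have hcont : Continuous fun t : ℝ => K * t ^ α + b := by fun_prop (disch := positivity)
  have hlim : Tendsto (fun t : ℝ => K * t ^ α + b) (𝓝[>] 0) (𝓝 b) := by
    simpa [Real.zero_rpow hα.ne'] using (hcont.tendsto 0).mono_left nhdsWithin_le_nhds
  exact ge_of_tendsto hlim (by filter_upwards [Ioo_mem_nhdsGT hT] using h)

section HalfBall

variable {d : ℕ}

lemma isLinearMap_lastCoord : IsLinearMap ℝ (lastCoord : Euc d → ℝ) := by
  constructor <;> intros <;> unfold lastCoord <;> split_ifs <;> simp

lemma convex_halfBall (r : ℝ) : Convex ℝ (halfBall d r) := by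
  have : halfBall d r = ball 0 r ∩ {x | 0 < lastCoord x} := by ext; simp [halfBall]
  rw [this]
  exact (convex_ball 0 r).inter (convex_halfSpace_gt isLinearMap_lastCoord 0)

lemma convex_flatBall (r : ℝ) : Convex ℝ (flatBall d r) := by
  have : flatBall d r = ball 0 r ∩ {x | lastCoord x = 0} := by ext; simp [flatBall]
  rw [this]
  exact (convex_ball 0 r).inter (convex_hyperplane isLinearMap_lastCoord 0)

lemma halfBall_mono {r R : ℝ} (h : r ≤ R) : halfBall d r ⊆ halfBall d R :=
  fun _ hx => ⟨hx.1.trans_le h, hx.2⟩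

lemma flatBall_mono {r R : ℝ} (h : r ≤ R) : flatBall d r ⊆ flatBall d R :=
  fun _ hx => ⟨hx.1.trans_le h, hx.2⟩

end HalfBall

variable {k : ℕ}

def normalVec (k : ℕ) : Euc (k + 1) := EuclideanSpace.single (Fin.last k) 1

lemma norm_normalVec : ‖normalVec k‖ = 1 := by simp [normalVec]

lemma lastCoord_eq_apply_last (x : Euc (k + 1)) : lastCoord x = x (Fin.last k) :=
  dif_pos k.succ_pos

lemma inner_single_one {ι : Type*} [Fintype ι] [DecidableEq ι] (x : EuclideanSpace ℝ ι) (i : ι) :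
    ⟪x, EuclideanSpace.single i 1⟫ = x i := by
  simp [EuclideanSpace.inner_single_right]

lemma inner_normalVec (x : Euc (k + 1)) : ⟪x, normalVec k⟫ = lastCoord x := by
  rw [normalVec, inner_single_one, lastCoord_eq_apply_last]

lemma lastCoord_add_smul_normalVec (x : Euc (k + 1)) (t : ℝ) :
    lastCoord (x + t • normalVec k) = lastCoord x + t := by
  simp [lastCoord_eq_apply_last, normalVec]

lemma norm_add_smul_normalVec_le (x : Euc (k + 1)) {t : ℝ} (ht : 0 ≤ t) :
    ‖x + t • normalVec k‖ ≤ ‖x‖ + t := by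
  simpa [norm_smul, norm_normalVec, abs_of_nonneg ht] using norm_add_le x (t • normalVec k)

lemma add_smul_normalVec_mem_halfBall {x : Euc (k + 1)} {r t : ℝ} (hx : lastCoord x = 0)
    (ht : 0 < t) (hxt : ‖x‖ + t < r) : x + t • normalVec k ∈ halfBall (k + 1) r :=
  ⟨(norm_add_smul_normalVec_le x ht.le).trans_lt hxt, by
    rwa [lastCoord_add_smul_normalVec, hx, zero_add]⟩

lemma flatBall_subset_closure_halfBall (r : ℝ) :
    flatBall (k + 1) r ⊆ closure (halfBall (k + 1) r) := by
  intro x hx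
  have hlim : Tendsto (fun t : ℝ => x + t • normalVec k) (𝓝[>] 0) (𝓝 x) := by
    have : Continuous fun t : ℝ => x + t • normalVec k := by fun_prop
    simpa using (this.tendsto 0).mono_left nhdsWithin_le_nhds
  refine mem_closure_of_tendsto hlim ?_
  filter_upwards [Ioo_mem_nhdsGT (sub_pos.2 hx.1)] with t ht
  exact add_smul_normalVec_mem_halfBall hx.2 ht.1 (by linarith [ht.2])

section Increments

variable {u : Euc (k + 1) → ℝ} {Du H : Euc (k + 1) → Euc (k + 1)} {C α r R : ℝ}

lemma abs_normal_increment_le (hC : 0 ≤ C) (hα : 0 ≤ α) (hrR : r ≤ R)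
    (hgrad : ∀ x ∈ closure (halfBall (k + 1) R),
      HasGradientWithinAt u (Du x) (closure (halfBall (k + 1) R)) x)
    (hHolDu : ∀ x ∈ closure (halfBall (k + 1) r), ∀ y ∈ closure (halfBall (k + 1) r),
      |lastCoord (Du x) - lastCoord (Du y)| ≤ C * ‖x - y‖ ^ α)
    {y : Euc (k + 1)} (hy : y ∈ flatBall (k + 1) r) (huy : u y = 0)
    {t : ℝ} (ht : 0 < t) (hyt : ‖y‖ + t < r) :
    |u (y + t • normalVec k) - t * lastCoord (Du y)| ≤ t * (C * t ^ α) := by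
  have hseg : segment ℝ y (y + t • normalVec k) ⊆ closure (halfBall (k + 1) r) :=
    (convex_halfBall r).closure.segment_subset (flatBall_subset_closure_halfBall r hy)
      (subset_closure (add_smul_normalVec_mem_halfBall hy.2 ht hyt))
  have hbound : ∀ z ∈ segment ℝ y (y + t • normalVec k),
      |⟪Du z, y + t • normalVec k - y⟫ - t * lastCoord (Du y)| ≤ t * (C * t ^ α) := by
    intro z hz
    have hzy : ‖z - y‖ ≤ t := by
      simpa [norm_smul, norm_normalVec, abs_of_pos ht] using norm_sub_le_of_mem_segment hz
    rw [add_sub_cancel_left, inner_smul_right, inner_normalVec, ← mul_sub, abs_mul,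
      abs_of_pos ht]
    gcongr
    exact (hHolDu z (hseg hz) y (hseg (left_mem_segment ℝ _ _))).trans (by gcongr)
  simpa [huy] using abs_sub_sub_le_of_hasGradientWithinAt_segment hgrad
    (hseg.trans (closure_mono (halfBall_mono hrR))) hbound

lemma abs_tangential_increment_le (hC : 0 ≤ C) (hα : 0 ≤ α) (i : Fin (k + 1))
    (hgrad : ∀ x ∈ closure (halfBall (k + 1) R),
      HasGradientWithinAt u (Du x) (closure (halfBall (k + 1) R)) x)
    (hHolH : ∀ x ∈ flatBall (k + 1) r, ∀ y ∈ flatBall (k + 1) r,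
      |H x i - H y i| ≤ C * ‖x - y‖ ^ α)
    (hexp : ∀ x ∈ halfBall (k + 1) R, ∀ x₀ ∈ flatBall (k + 1) r,
      |Du x i - H x₀ i * lastCoord x| ≤ C * ‖x - x₀‖ ^ (1 + α))
    {x₀ : Euc (k + 1)} {h t : ℝ} (hx₀ : x₀ ∈ flatBall (k + 1) r)
    (hx₁ : x₀ + h • EuclideanSpace.single i 1 ∈ flatBall (k + 1) r) (hh : 0 ≤ h) (ht : 0 < t)
    (hx₀t : ‖x₀‖ + t < R) (hx₁t : ‖x₀ + h • EuclideanSpace.single i 1‖ + t < R) :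
    |u (x₀ + h • EuclideanSpace.single i 1 + t • normalVec k) - u (x₀ + t • normalVec k)
      - h * (t * H x₀ i)| ≤ t * (C * h * t ^ α + C * h ^ (1 + α)) := by
  set x₁ := x₀ + h • EuclideanSpace.single i 1
  have hseg : segment ℝ (x₀ + t • normalVec k) (x₁ + t • normalVec k) ⊆ halfBall (k + 1) R :=
    (convex_halfBall R).segment_subset (add_smul_normalVec_mem_halfBall hx₀.2 ht hx₀t)
      (add_smul_normalVec_mem_halfBall hx₁.2 ht hx₁t)
  refine abs_sub_sub_le_of_hasGradientWithinAt_segment hgrad (hseg.trans subset_closure)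
    fun z hz => ?_
  obtain ⟨y, hy, rfl⟩ : ∃ y ∈ segment ℝ x₀ x₁, z = y + t • normalVec k := by
    refine ⟨z - t • normalVec k, ?_, (sub_add_cancel _ _).symm⟩
    rw [← mem_segment_translate ℝ (t • normalVec k)]
    simpa [add_comm] using hz
  have hyflat : y ∈ flatBall (k + 1) r := (convex_flatBall r).segment_subset hx₀ hx₁ hy
  have hyx₀ : ‖y - x₀‖ ≤ h := by
    simpa [x₁, norm_smul, abs_of_nonneg hh] using norm_sub_le_of_mem_segment hy
  have hDu : |Du (y + t • normalVec k) i - t * H y i| ≤ C * t ^ (1 + α) := by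
    have := hexp _ (hseg hz) y hyflat
    rwa [lastCoord_add_smul_normalVec, hyflat.2, zero_add, add_sub_cancel_left, norm_smul,
      norm_normalVec, mul_one, Real.norm_of_nonneg ht.le, mul_comm (H y i)] at this
  have hH : t * |H y i - H x₀ i| ≤ t * (C * h ^ α) :=
    mul_le_mul_of_nonneg_left ((hHolH y hyflat x₀ hx₀).trans (by gcongr)) ht.le
  have hsplit : ⟪Du (y + t • normalVec k), x₁ + t • normalVec k - (x₀ + t • normalVec k)⟫
      - h * (t * H x₀ i)
      = h * ((Du (y + t • normalVec k) i - t * H y i) + t * (H y i - H x₀ i)) := by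
    simp only [x₁, add_sub_add_right_eq_sub, add_sub_cancel_left, inner_smul_right,
      inner_single_one]
    ring
  rw [hsplit, abs_mul, abs_of_nonneg hh]
  calc h * |(Du (y + t • normalVec k) i - t * H y i) + t * (H y i - H x₀ i)|
      ≤ h * (C * t ^ (1 + α) + t * (C * h ^ α)) := by
        gcongr
        exact (abs_add_le _ _).trans (add_le_add hDu (by rwa [abs_mul, abs_of_pos ht]))
    _ = t * (C * h * t ^ α + C * h ^ (1 + α)) := by
        rw [Real.rpow_add ht, Real.rpow_add' hh (by linarith), Real.rpow_one, Real.rpow_one]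
        ring

lemma abs_lastCoord_increment_le (hC : 0 ≤ C) (hα : 0 ≤ α) (hrR : r ≤ R) (i : Fin (k + 1))
    (hgrad : ∀ x ∈ closure (halfBall (k + 1) R),
      HasGradientWithinAt u (Du x) (closure (halfBall (k + 1) R)) x)
    (hu0 : ∀ x ∈ flatBall (k + 1) R, u x = 0)
    (hHolDu : ∀ x ∈ closure (halfBall (k + 1) r), ∀ y ∈ closure (halfBall (k + 1) r),
      |lastCoord (Du x) - lastCoord (Du y)| ≤ C * ‖x - y‖ ^ α)
    (hHolH : ∀ x ∈ flatBall (k + 1) r, ∀ y ∈ flatBall (k + 1) r,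
      |H x i - H y i| ≤ C * ‖x - y‖ ^ α)
    (hexp : ∀ x ∈ halfBall (k + 1) R, ∀ x₀ ∈ flatBall (k + 1) r,
      |Du x i - H x₀ i * lastCoord x| ≤ C * ‖x - x₀‖ ^ (1 + α))
    {x₀ : Euc (k + 1)} {h t : ℝ} (hx₀ : x₀ ∈ flatBall (k + 1) r)
    (hx₁ : x₀ + h • EuclideanSpace.single i 1 ∈ flatBall (k + 1) r) (hh : 0 ≤ h) (ht : 0 < t)
    (hx₀t : ‖x₀‖ + t < r) (hx₁t : ‖x₀ + h • EuclideanSpace.single i 1‖ + t < r) :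
    |lastCoord (Du (x₀ + h • EuclideanSpace.single i 1)) - lastCoord (Du x₀) - h * H x₀ i|
      ≤ (2 * C + C * h) * t ^ α + C * h ^ (1 + α) := by
  set x₁ := x₀ + h • EuclideanSpace.single i 1
  have hvert₀ := abs_normal_increment_le hC hα hrR hgrad hHolDu hx₀
    (hu0 x₀ (flatBall_mono hrR hx₀)) ht hx₀t
  have hvert₁ := abs_normal_increment_le hC hα hrR hgrad hHolDu hx₁
    (hu0 x₁ (flatBall_mono hrR hx₁)) ht hx₁t
  have htan := abs_tangential_increment_le hC hα i hgrad hHolH hexp hx₀ hx₁ hh ht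
    (by linarith) (by linarith)
  have htel : t * (lastCoord (Du x₁) - lastCoord (Du x₀) - h * H x₀ i)
      = (u (x₀ + t • normalVec k) - t * lastCoord (Du x₀))
        - (u (x₁ + t • normalVec k) - t * lastCoord (Du x₁))
        + (u (x₁ + t • normalVec k) - u (x₀ + t • normalVec k) - h * (t * H x₀ i)) := by
    ring
  refine le_of_mul_le_mul_left ?_ ht
  calc t * |lastCoord (Du x₁) - lastCoord (Du x₀) - h * H x₀ i|
      = |t * (lastCoord (Du x₁) - lastCoord (Du x₀) - h * H x₀ i)| := by
        rw [abs_mul, abs_of_pos ht]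
    _ ≤ t * (C * t ^ α) + t * (C * t ^ α) + t * (C * h * t ^ α + C * h ^ (1 + α)) := by
        rw [htel]
        exact (abs_add_le _ _).trans (add_le_add ((abs_sub _ _).trans
          (add_le_add hvert₀ hvert₁)) htan)
    _ = t * ((2 * C + C * h) * t ^ α + C * h ^ (1 + α)) := by ring

end Increments

theorem normal_derivative_C1alpha_on_boundary_general
    (d : ℕ) (α C : ℝ) (hα : 0 < α) (hC : 0 < C) :
    ∃ C' : ℝ, 0 < C' ∧
      ∀ (u : Euc d → ℝ) (Du : Euc d → Euc d) (H : Euc d → Euc d),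
        -- `u` is continuously differentiable up to the flat boundary, with gradient `Du`
        (∀ x ∈ closure (halfBall d 1),
          HasGradientWithinAt u (Du x) (closure (halfBall d 1)) x) →
        ContinuousOn Du (closure (halfBall d 1)) →
        -- `u` vanishes on the flat boundary
        (∀ x ∈ flatBall d 1, u x = 0) →
        -- the normal derivative `∂_d u` is `α`-Hölder on the closure of `B_{3/4}⁺`
        (∀ x ∈ closure (halfBall d (3/4)), ∀ y ∈ closure (halfBall d (3/4)),
          |lastCoord (Du x) - lastCoord (Du y)| ≤ C * ‖x - y‖ ^ α) →
        -- the coefficients `H_i` are `α`-Hölder on `B⁰_{3/4}`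
        (∀ i : Fin d, (i : ℕ) + 1 < d →
          ∀ x ∈ flatBall d (3/4), ∀ y ∈ flatBall d (3/4),
            |H x i - H y i| ≤ C * ‖x - y‖ ^ α) →
        -- first-order expansion of the tangential derivatives `∂_i u`
        (∀ i : Fin d, (i : ℕ) + 1 < d →
          ∀ x ∈ halfBall d 1, ∀ x₀ ∈ flatBall d (3/4),
            |Du x i - H x₀ i * lastCoord x| ≤ C * ‖x - x₀‖ ^ (1 + α)) →
        -- conclusion: `∂_d u` restricted to `B⁰_{3/4}` is `C^{1,α}`, with
        -- tangential derivatives given by `H`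
        ∀ x₀ ∈ flatBall d (3/4), ∀ i : Fin d, (i : ℕ) + 1 < d →
          ∀ h : ℝ, 0 < h → x₀ + h • EuclideanSpace.single i 1 ∈ flatBall d (3/4) →
            |lastCoord (Du (x₀ + h • EuclideanSpace.single i 1)) - lastCoord (Du x₀) -
              h * H x₀ i| ≤ C' * h ^ (1 + α) := by
  refine ⟨C, hC, fun u Du H hgrad _ hu0 hHolDu hHolH hexp x₀ hx₀ i hi h hh hx₁ => ?_⟩
  obtain ⟨k, rfl⟩ : ∃ k, d = k + 1 := ⟨d - 1, by omega⟩
  set x₁ := x₀ + h • EuclideanSpace.single i 1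
  have hM : max ‖x₀‖ ‖x₁‖ < 3 / 4 := max_lt hx₀.1 hx₁.1
  refine le_of_forall_le_mul_rpow_add (K := 2 * C + C * h) hα (sub_pos.2 hM) fun t ht => ?_
  have hx₀t : ‖x₀‖ + t < 3 / 4 := by linarith [ht.2, le_max_left ‖x₀‖ ‖x₁‖]
  have hx₁t : ‖x₁‖ + t < 3 / 4 := by linarith [ht.2, le_max_right ‖x₀‖ ‖x₁‖]
  exact abs_lastCoord_increment_le hC.le hα.le (by norm_num) i hgrad hu0 hHolDu (hHolH i hi)
    (hexp i hi) hx₀ hx₁ hh.le ht.1 hx₀t hx₁t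

/-- Claim in Lemma 4.1: if the tangential derivatives of `u` admit
first-order boundary expansions with Hölder coefficients `H_i`, then the restriction of
the normal derivative `∂_d u` to the flat boundary is `C^{1,α}`, with tangential
derivatives `H_i`. -/
theorem normal_derivative_C1alpha_on_boundary
    (d : ℕ) (hd : 1 ≤ d) (α C : ℝ) (hα : 0 < α) (hα1 : α < 1) (hC : 0 < C) :
    ∃ C' : ℝ, 0 < C' ∧
      ∀ (u : Euc d → ℝ) (Du : Euc d → Euc d) (H : Euc d → Euc d),
        -- `u` is continuously differentiable up to the flat boundary, with gradient `Du`
        (∀ x ∈ closure (halfBall d 1),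
          HasGradientWithinAt u (Du x) (closure (halfBall d 1)) x) →
        ContinuousOn Du (closure (halfBall d 1)) →
        -- `u` vanishes on the flat boundary
        (∀ x ∈ flatBall d 1, u x = 0) →
        -- the normal derivative `∂_d u` is `α`-Hölder on the closure of `B_{3/4}⁺`
        (∀ x ∈ closure (halfBall d (3/4)), ∀ y ∈ closure (halfBall d (3/4)),
          |lastCoord (Du x) - lastCoord (Du y)| ≤ C * ‖x - y‖ ^ α) →
        -- the coefficients `H_i` are `α`-Hölder on `B⁰_{3/4}`
        (∀ i : Fin d, (i : ℕ) + 1 < d →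
          ∀ x ∈ flatBall d (3/4), ∀ y ∈ flatBall d (3/4),
            |H x i - H y i| ≤ C * ‖x - y‖ ^ α) →
        -- first-order expansion of the tangential derivatives `∂_i u`
        (∀ i : Fin d, (i : ℕ) + 1 < d →
          ∀ x ∈ halfBall d 1, ∀ x₀ ∈ flatBall d (3/4),
            |Du x i - H x₀ i * lastCoord x| ≤ C * ‖x - x₀‖ ^ (1 + α)) →
        -- conclusion: `∂_d u` restricted to `B⁰_{3/4}` is `C^{1,α}`, with
        -- tangential derivatives given by `H`
        ∀ x₀ ∈ flatBall d (3/4), ∀ i : Fin d, (i : ℕ) + 1 < d →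
          ∀ h : ℝ, 0 < h → x₀ + h • EuclideanSpace.single i 1 ∈ flatBall d (3/4) →
            |lastCoord (Du (x₀ + h • EuclideanSpace.single i 1)) - lastCoord (Du x₀) -
              h * H x₀ i| ≤ C' * h ^ (1 + α) :=
  normal_derivative_C1alpha_on_boundary_general d α C hα hC
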